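/- arXiv:2406.04078 — 3 statements merged into one kernel-verified Lean document; each statement's English description precedes it below -/
import Mathlib

section
/- For all d ≥ 3 and all D ⊆ ℝ^d with nonempty interior, the following are equivalent: (a) CH, i.e., 2^ℵ₀ ≤ ℵ₁; (b) for all nonzero vectors u₁, …, u_d spanning ℝ^d, there are A₁, …, A_d covering D such that H_{u_i}(p) ∩ A_i is countable for all p ∈ ℝ^d and all 1 ≤ i ≤ d; (c) there are nonzero vectors u₁, …, u_{2d−2} and sets A₁, …, A_{2d−2} covering D such that H_{u_i}(p) ∩ A_i is countable for all p ∈ ℝ^d and all 1 ≤ i ≤ 2d−2. -/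
open Cardinal

/-- `Hplane u p` is the hyperplane through `p` orthogonal to `u`. -/
def Hplane {d : ℕ} (u p : EuclideanSpace ℝ (Fin d)) : Set (EuclideanSpace ℝ (Fin d)) :=
  {x | (inner ℝ (x - p) u : ℝ) = 0}

/-!
Under CH, embed `ℝ` into `ω₁` and put `x` into `A i` when `⟪x, u i⟫` is the largest of the
`⟪x, u k⟫` in that order. On a hyperplane `H_{u i}(p)` the value `⟪x, u i⟫` is fixed, so every
`⟪x, u k⟫` lies in a countable initial segment, and a spanning family recovers `x` from them.

Conversely, at most `2d - 2` directions split into two groups of at most `d - 1`, orthogonal to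
nonzero vectors `w₁` and `w₂` respectively. A piece of the first group meets every line in
direction `w₁` in a countable set (the line lies in one of its hyperplanes), and likewise for the
second group and `w₂`. So a square `c + s w₁ + t w₂` inside `D`, of size `𝔠 × 𝔠`, is covered by
one set with countable sections in `t` and one with countable sections in `s`. If `𝔠 > ℵ₁`, the
first sections over `ℵ₁` values of `s` miss some `t`, whose countable second section then
contains all those values (Sierpiński).
-/

open Set Filter Topology

universe u

theorem Cardinal.continuum_le_aleph_one_iff_lift : continuum.{u} ≤ ℵ₁ ↔ continuum.{0} ≤ ℵ₁ := by
  rw [← lift_continuum.{u, 0}, lift_le_aleph_one]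

theorem Cardinal.mk_le_aleph_one_of_forall_or {α β : Type u} {U : Set α} {V : Set β}
    {P Q : α → β → Prop} (hcov : ∀ a ∈ U, ∀ b ∈ V, P a b ∨ Q a b)
    (hP : ∀ a, {b | P a b}.Countable) (hQ : ∀ b, {a | Q a b}.Countable) (hU : ℵ₁ ≤ #U) :
    #V ≤ ℵ₁ := by
  by_contra! hV
  obtain ⟨S, hSU, hS⟩ := le_mk_iff_exists_subset.mp hU
  have hT : #(⋃ a ∈ S, {b | P a b}) ≤ ℵ₁ :=
    calc #(⋃ a ∈ S, {b | P a b}) ≤ #S * ⨆ a : S, #{b | P a b} := mk_biUnion_le _ _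
      _ ≤ ℵ₁ * ℵ₀ := by
        gcongr
        · exact hS.le
        · exact ciSup_le' fun a => (hP a).le_aleph0
      _ = ℵ₁ := mul_aleph0_eq (aleph0_le_aleph 1)
  obtain ⟨b, hbV, hbT⟩ := not_subset.mp fun h : V ⊆ ⋃ a ∈ S, {b | P a b} =>
    (hT.trans_lt hV).not_ge (mk_le_mk_of_subset h)
  have hSQ : S ⊆ {a | Q a b} := fun a ha =>
    (hcov a (hSU ha) b hbV).resolve_left fun hab => hbT (mem_biUnion ha hab)
  have := ((hQ b).mono hSQ).le_aleph0
  rw [hS] at this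
  exact aleph0_lt_aleph_one.not_ge this

theorem Cardinal.exists_iUnion_eq_univ_countable_fiber {X Y ι : Type*} [Finite ι] [Nonempty ι]
    (hY : #Y ≤ ℵ₁) (f : ι → X → Y) (hf : Function.Injective fun x i => f i x) :
    ∃ A : ι → Set X, ⋃ i, A i = Set.univ ∧ ∀ i y, (f i ⁻¹' {y} ∩ A i).Countable := by
  obtain ⟨r⟩ : Nonempty (Y ↪ (ℵ₁ : Cardinal).ord.ToType) := by
    rw [← le_def]; simpa using hY
  have hr : ∀ y, {y' | r y' ≤ r y}.Countable := fun y => by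
    have hIio : (Iio (r y)).Countable :=
      le_aleph0_iff_set_countable.mp <|
        lt_aleph_one_iff.mp (by simpa using mk_Iio_lt (r y) (by simp))
    have hIic : (Iic (r y)).Countable := by simpa using hIio.insert (r y)
    exact hIic.preimage r.injective
  refine ⟨fun i => {x | ∀ k, r (f k x) ≤ r (f i x)}, ?_, fun i y => ?_⟩
  · exact eq_univ_of_forall fun x => mem_iUnion.mpr (Finite.exists_max fun k => r (f k x))
  · refine ((countable_pi fun _ => hr y).preimage hf).mono ?_
    rintro x ⟨rfl, hx⟩ k
    exact hx k

theorem continuum_le_aleph_one_of_union_mem_nhds {E : Type*} [AddCommGroup E] [Module ℝ E]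
    [TopologicalSpace E] [ContinuousAdd E] [ContinuousSMul ℝ E] {B₁ B₂ : Set E} {c w₁ w₂ : E}
    (h₁ : ∀ x, ((fun t : ℝ => x + t • w₂) ⁻¹' B₁).Countable)
    (h₂ : ∀ x, ((fun s : ℝ => x + s • w₁) ⁻¹' B₂).Countable) (hc : B₁ ∪ B₂ ∈ 𝓝 c) :
    (𝔠 : Cardinal.{0}) ≤ ℵ₁ := by
  let φ : ℝ × ℝ → E := fun st => c + st.1 • w₁ + st.2 • w₂
  have hφ : φ ⁻¹' (B₁ ∪ B₂) ∈ 𝓝 (0, 0) :=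
    (by fun_prop : Continuous φ).continuousAt.preimage_mem_nhds (by simpa [φ] using hc)
  obtain ⟨U, hU, V, hV, hUV⟩ := mem_nhds_prod_iff.mp hφ
  have hQ : ∀ t, {s | φ (s, t) ∈ B₂}.Countable := fun t => by
    simp only [φ, add_right_comm c]
    exact h₂ (c + t • w₂)
  have := mk_le_aleph_one_of_forall_or (P := fun s t => φ (s, t) ∈ B₁)
    (fun s hs t ht => hUV (mk_mem_prod hs ht)) (fun s => h₁ (c + s • w₁)) hQ
    (by rw [cardinal_eq_of_mem_nhds ℝ hU, mk_real]; exact aleph_one_le_continuum)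
  rwa [cardinal_eq_of_mem_nhds ℝ hV, mk_real] at this

section InnerProductSpace

variable {𝕜 E : Type*} [RCLike 𝕜] [NormedAddCommGroup E] [InnerProductSpace 𝕜 E]

theorem injective_inner_of_span_range_eq_top {ι : Type*} {u : ι → E}
    (hu : Submodule.span 𝕜 (range u) = ⊤) : Function.Injective fun x i => inner 𝕜 x (u i) := by
  intro x y hxy
  have hker : Submodule.span 𝕜 (range u) ≤ LinearMap.ker (innerₛₗ 𝕜 (x - y)) :=
    Submodule.span_le.mpr <| range_subset_iff.mpr fun i => by simp [congrFun hxy i]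
  rw [hu, top_le_iff] at hker
  have : x - y ∈ LinearMap.ker (innerₛₗ 𝕜 (x - y)) := hker ▸ Submodule.mem_top
  simpa only [LinearMap.mem_ker, innerₛₗ_apply_apply, inner_self_eq_zero, sub_eq_zero] using this

theorem exists_ne_zero_forall_inner_eq_zero {ι : Type*} [Fintype ι] (v : ι → E)
    (h : Fintype.card ι < Module.finrank 𝕜 E) : ∃ w : E, w ≠ 0 ∧ ∀ i, inner 𝕜 w (v i) = 0 := by
  let K := Submodule.span 𝕜 (range v)
  have : FiniteDimensional 𝕜 K := FiniteDimensional.span_of_finite 𝕜 (finite_range v)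
  have hK : K ≠ ⊤ := fun hK => by
    have := finrank_range_le_card (R := 𝕜) v
    rw [Set.finrank, show Submodule.span 𝕜 (range v) = ⊤ from hK, finrank_top] at this
    omega
  obtain ⟨w, hw, hw0⟩ := (Submodule.ne_bot_iff Kᗮ).mp (Submodule.orthogonal_eq_bot_iff.not.mpr hK)
  exact ⟨w, hw0, fun i =>
    Submodule.inner_left_of_mem_orthogonal (Submodule.subset_span (mem_range_self i)) hw⟩

theorem exists_ne_zero_ne_zero_inner_eq_zero_or {n : ℕ} (u : Fin n → E)
    (hn : n + 2 ≤ 2 * Module.finrank 𝕜 E) :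
    ∃ w₁ w₂ : E, w₁ ≠ 0 ∧ w₂ ≠ 0 ∧ ∀ i, inner 𝕜 w₁ (u i) = 0 ∨ inner 𝕜 w₂ (u i) = 0 := by
  set m := Module.finrank 𝕜 E - 1
  have hlo : Fintype.card {i : Fin n // (i : ℕ) < m} < Module.finrank 𝕜 E :=
    (Fintype.card_le_of_injective (fun i => (⟨i.1, i.2⟩ : Fin m))
      fun i j h => by ext; simpa [Fin.ext_iff] using h).trans_lt (by simp; omega)
  have hhi : Fintype.card {i : Fin n // ¬ (i : ℕ) < m} < Module.finrank 𝕜 E :=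
    (Fintype.card_le_of_injective (fun i => (⟨i.1 - m, by omega⟩ : Fin m))
      fun i j h => by ext; simp [Fin.ext_iff] at h; omega).trans_lt (by simp; omega)
  obtain ⟨w₁, hw₁, h₁⟩ := exists_ne_zero_forall_inner_eq_zero (fun i => u i.1) hlo
  obtain ⟨w₂, hw₂, h₂⟩ := exists_ne_zero_forall_inner_eq_zero (fun i => u i.1) hhi
  refine ⟨w₁, w₂, hw₁, hw₂, fun i => ?_⟩
  by_cases hi : (i : ℕ) < m
  · exact .inl (h₁ ⟨i, hi⟩)
  · exact .inr (h₂ ⟨i, hi⟩)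

end InnerProductSpace

section Hplane

variable {d : ℕ}

theorem Hplane_eq_preimage (u p : EuclideanSpace ℝ (Fin d)) :
    Hplane u p = (fun x => inner ℝ x u) ⁻¹' {inner ℝ p u} := by
  ext x
  simp [Hplane, inner_sub_left, sub_eq_zero]

theorem countable_preimage_line_of_countable_Hplane_inter {u w : EuclideanSpace ℝ (Fin d)}
    {A : Set (EuclideanSpace ℝ (Fin d))} (hw : w ≠ 0) (hwu : inner ℝ w u = 0)
    (hA : ∀ p, (Hplane u p ∩ A).Countable) (x : EuclideanSpace ℝ (Fin d)) :
    ((fun t : ℝ => x + t • w) ⁻¹' A).Countable :=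
  ((hA x).preimage ((add_right_injective x).comp (smul_left_injective ℝ hw))).mono
    fun t ht => show x + t • w ∈ Hplane u x ∩ A from
      ⟨by simp [Hplane, real_inner_smul_left, hwu], ht⟩

theorem exists_iUnion_eq_univ_countable_Hplane_inter (hCH : (𝔠 : Cardinal.{0}) ≤ ℵ₁)
    {ι : Type*} [Finite ι] [Nonempty ι] {u : ι → EuclideanSpace ℝ (Fin d)}
    (hu : Submodule.span ℝ (range u) = ⊤) :
    ∃ A : ι → Set (EuclideanSpace ℝ (Fin d)),
      ⋃ i, A i = Set.univ ∧ ∀ p i, (Hplane (u i) p ∩ A i).Countable := by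
  obtain ⟨A, hA, hAc⟩ := exists_iUnion_eq_univ_countable_fiber (mk_real ▸ hCH)
    (fun i x => inner ℝ x (u i)) (injective_inner_of_span_range_eq_top hu)
  exact ⟨A, hA, fun p i => Hplane_eq_preimage (u i) p ▸ hAc i _⟩

theorem continuum_le_aleph_one_of_subset_iUnion {ι : Type*} [Finite ι]
    {D : Set (EuclideanSpace ℝ (Fin d))} (hD : (interior D).Nonempty)
    {u : ι → EuclideanSpace ℝ (Fin d)} {A : ι → Set (EuclideanSpace ℝ (Fin d))}
    (hcov : D ⊆ ⋃ i, A i) (hA : ∀ p i, (Hplane (u i) p ∩ A i).Countable)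
    {w₁ w₂ : EuclideanSpace ℝ (Fin d)} (hw₁ : w₁ ≠ 0) (hw₂ : w₂ ≠ 0)
    (hu : ∀ i, inner ℝ w₁ (u i) = 0 ∨ inner ℝ w₂ (u i) = 0) :
    (𝔠 : Cardinal.{0}) ≤ ℵ₁ := by
  obtain ⟨c, hc⟩ := hD
  refine continuum_le_aleph_one_of_union_mem_nhds (c := c) (w₁ := w₁) (w₂ := w₂)
    (B₁ := ⋃ i ∈ {i | inner ℝ w₂ (u i) = 0}, A i) (B₂ := ⋃ i ∈ {i | inner ℝ w₁ (u i) = 0}, A i)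
    (fun x => ?_) (fun x => ?_) ?_
  · rw [preimage_iUnion₂]
    exact (toFinite _).countable.biUnion fun i hi =>
      countable_preimage_line_of_countable_Hplane_inter hw₂ hi (fun p => hA p i) x
  · rw [preimage_iUnion₂]
    exact (toFinite _).countable.biUnion fun i hi =>
      countable_preimage_line_of_countable_Hplane_inter hw₁ hi (fun p => hA p i) x
  · refine mem_of_superset (mem_interior_iff_mem_nhds.mp hc) fun x hx => ?_
    obtain ⟨i, hi⟩ := mem_iUnion.mp (hcov hx)
    rcases hu i with h | h
    · exact .inr (mem_biUnion h hi)
    · exact .inl (mem_biUnion h hi)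

theorem continuum_le_aleph_one_of_subset_iUnion_fin {n : ℕ} (hn : n + 2 ≤ 2 * d)
    {D : Set (EuclideanSpace ℝ (Fin d))} (hD : (interior D).Nonempty)
    (u : Fin n → EuclideanSpace ℝ (Fin d)) (A : Fin n → Set (EuclideanSpace ℝ (Fin d)))
    (hcov : D ⊆ ⋃ i, A i) (hA : ∀ p i, (Hplane (u i) p ∩ A i).Countable) :
    (𝔠 : Cardinal.{0}) ≤ ℵ₁ := by
  obtain ⟨w₁, w₂, hw₁, hw₂, hu⟩ := exists_ne_zero_ne_zero_inner_eq_zero_or (𝕜 := ℝ) u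
    (by rwa [finrank_euclideanSpace_fin])
  exact continuum_le_aleph_one_of_subset_iUnion hD hcov hA hw₁ hw₂ hu

end Hplane

theorem stmt12 (d : ℕ) (hd : 3 ≤ d)
    (D : Set (EuclideanSpace ℝ (Fin d))) (hD : (interior D).Nonempty) :
    ((continuum ≤ aleph 1 ↔
      (∀ u : Fin d → EuclideanSpace ℝ (Fin d), (∀ i, u i ≠ 0) →
        Submodule.span ℝ (Set.range u) = ⊤ →
        ∃ A : Fin d → Set (EuclideanSpace ℝ (Fin d)),
          D ⊆ (⋃ i, A i) ∧
          ∀ (p : EuclideanSpace ℝ (Fin d)) (i : Fin d),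
            (Hplane (u i) p ∩ A i).Countable)) ∧
     (continuum ≤ aleph 1 ↔
      (∃ u : Fin (2 * d - 2) → EuclideanSpace ℝ (Fin d), (∀ i, u i ≠ 0) ∧
        ∃ A : Fin (2 * d - 2) → Set (EuclideanSpace ℝ (Fin d)),
          D ⊆ (⋃ i, A i) ∧
          ∀ (p : EuclideanSpace ℝ (Fin d)) (i : Fin (2 * d - 2)),
            (Hplane (u i) p ∩ A i).Countable))) := by
  simp only [continuum_le_aleph_one_iff_lift]
  let b := (EuclideanSpace.basisFun (Fin d) ℝ).toBasis
  have : Nonempty (Fin d) := ⟨⟨0, by omega⟩⟩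
  refine ⟨⟨fun hCH u _ hu => ?_, fun h => ?_⟩, ⟨fun hCH => ?_, fun ⟨u, _, A, hcov, hA⟩ => ?_⟩⟩
  · obtain ⟨A, hA, hAc⟩ := exists_iUnion_eq_univ_countable_Hplane_inter hCH hu
    exact ⟨A, hA ▸ subset_univ D, hAc⟩
  · obtain ⟨A, hcov, hA⟩ := h b b.ne_zero b.span_eq
    exact continuum_le_aleph_one_of_subset_iUnion_fin (by omega) hD b A hcov hA
  · have hle : d ≤ 2 * d - 2 := by omega
    have : Nonempty (Fin (2 * d - 2)) := ⟨⟨0, by omega⟩⟩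
    have hσ := Function.invFun_surjective (Fin.castLE_injective hle)
    obtain ⟨A, hA, hAc⟩ := exists_iUnion_eq_univ_countable_Hplane_inter hCH
      (u := b ∘ Function.invFun (Fin.castLE hle)) (by rw [hσ.range_comp, b.span_eq])
    exact ⟨_, fun i => b.ne_zero _, A, hA ▸ subset_univ D, hAc⟩
  · exact continuum_le_aleph_one_of_subset_iUnion_fin (by omega) hD u A hcov hA
end

section
/- Let δ be an ordinal, d ≥ 3, n ≥ 0, and N = (n+1)(d−1)+1. Suppose u₁, …, u_N are distinct nonzero vectors of ℝ^d, and A₁, …, A_N ⊆ ℝ^d satisfy: for all p ∈ ℝ^d and all 1 ≤ k ≤ N, the set H_{u_k}(p) ∩ A_k has cardinality < ℵ_δ. If 2^ℵ₀ > ℵ_{δ+n}, then for every ε > 0 there is Z ⊆ (−ε, ε)^d of cardinality ℵ_{δ+n+1} such that for all p ∈ ℝ^d the translate p + Z is not contained in A₁ ∪ ⋯ ∪ A_N. -/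
/-!
Split the `(n + 1) * (d - 1) + 1` directions into `n + 2` blocks of at most `d - 1` vectors
and choose for block `j` a unit vector `v j` orthogonal to all of them. A line in direction
`v j` lies in the hyperplane `H_{u k}(q)` for every `k` in block `j`, so it meets `A k` in
fewer than `ℵ_δ` points. Pick `T j ⊆ ℝ` of size `ℵ_(δ + j)` (possible as
`ℵ_(δ + n + 1) ≤ 𝔠`); then `Z` is the grid of sums `∑ t j • v j` with `t j ∈ T j`, padded up
to size `ℵ_(δ + n + 1)`. Given `p`, choose the coordinates from the last one down: the values
of `t j` that send `p + ∑ t i • v i`, for some choice of the earlier coordinates, into an `A k`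
of block `j` form a union, indexed by a grid of size at most `ℵ_(δ + j - 1)` (a single point
if `j = 0`), of sets of size `< ℵ_δ`; so fewer than `#(T j)` values are excluded.
-/

open Cardinal

theorem Cardinal.mk_iUnion_lt_of_finite {ι X : Type*} [Finite ι] {κ : Cardinal} (hκ : ℵ₀ ≤ κ)
    {S : ι → Set X} (hS : ∀ i, #(S i) < κ) : #(⋃ i, S i) < κ := by
  induction ι using Finite.induction_empty_option with
  | of_equiv e ih => simpa only [e.surjective.iUnion_comp] using ih (fun i => hS (e i))
  | h_empty => simpa using aleph0_pos.trans_le hκ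
  | h_option ih =>
    rw [Set.iUnion_option]
    exact (mk_union_le _ _).trans_lt (add_lt_of_lt hκ (hS none) (ih fun i => hS (some i)))

section sumGrid

variable {E : Type} [AddCommGroup E] [Module ℝ E]

/-- The sums `∑ j < m, t j • v j` with `t j ∈ T j`. -/
def sumGrid (v : ℕ → E) (T : ℕ → Set ℝ) : ℕ → Set E
  | 0 => {0}
  | m + 1 => Set.image2 (fun z s => z + s • v m) (sumGrid v T m) (T m)

variable {v : ℕ → E} {T : ℕ → Set ℝ} {δ : Ordinal}

theorem mk_sumGrid_succ_le {m : ℕ} (hT : ∀ j ≤ m, #(T j) ≤ ℵ_ (δ + j)) :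
    #(sumGrid v T (m + 1)) ≤ ℵ_ (δ + m) := by
  induction m with
  | zero =>
    calc #(sumGrid v T 1) ≤ #({0} : Set E) * #(T 0) := mk_image2_le
      _ ≤ ℵ_ (δ + (0 : ℕ)) := by simpa using hT 0 le_rfl
  | succ m ih =>
    calc #(sumGrid v T (m + 2)) ≤ #(sumGrid v T (m + 1)) * #(T (m + 1)) := mk_image2_le
      _ ≤ ℵ_ (δ + m) * ℵ_ (δ + (m + 1 : ℕ)) :=
        mul_le_mul' (ih fun j hj => hT j (by omega)) (hT (m + 1) le_rfl)
      _ = ℵ_ (δ + (m + 1 : ℕ)) := by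
        rw [aleph_mul_aleph, max_eq_right (by gcongr; omega)]

theorem mk_biUnion_sumGrid_lt {m : ℕ} (hT : ∀ j < m, #(T j) ≤ ℵ_ (δ + j)) {S : E → Set ℝ}
    (hS : ∀ z, #(S z) < ℵ_ δ) : #(⋃ z ∈ sumGrid v T m, S z) < ℵ_ (δ + m) := by
  cases m with
  | zero => simpa [sumGrid] using hS 0
  | succ m =>
    calc #(⋃ z ∈ sumGrid v T (m + 1), S z)
        ≤ #(sumGrid v T (m + 1)) * ⨆ z : sumGrid v T (m + 1), #(S z) := mk_biUnion_le _ _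
      _ ≤ ℵ_ (δ + m) * ℵ_ (δ + m) := by
        gcongr
        · exact mk_sumGrid_succ_le fun j hj => hT j (by omega)
        · exact ciSup_le' fun z => (hS z).le.trans (aleph_le_aleph.2 le_self_add)
      _ < ℵ_ (δ + (m + 1 : ℕ)) := by
        rw [mul_eq_self (aleph0_le_aleph _), aleph_lt_aleph]
        gcongr
        omega

theorem exists_mem_sumGrid_add_notMem {ι : Type*} [Finite ι] {A : ι → Set E} (g : ι → ℕ)
    (hA : ∀ k q, #{s : ℝ | q + s • v (g k) ∈ A k} < ℵ_ δ) {m : ℕ}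
    (hT : ∀ j < m, #(T j) = ℵ_ (δ + j)) (p : E) :
    ∃ z ∈ sumGrid v T m, ∀ k, g k < m → p + z ∉ A k := by
  induction m generalizing p with
  | zero => exact ⟨0, rfl, fun k hk => absurd hk (Nat.not_lt_zero _)⟩
  | succ m ih =>
    set bad := ⋃ z ∈ sumGrid v T m, ⋃ k, {s : ℝ | p + z + s • v (g k) ∈ A k}
    have hbad : #bad < #(T m) := by
      rw [hT m m.lt_succ_self]
      exact mk_biUnion_sumGrid_lt (fun j hj => (hT j (by omega)).le) fun z =>
        mk_iUnion_lt_of_finite (aleph0_le_aleph _) fun k => hA k _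
    obtain ⟨s, hsT, hs⟩ : (T m \ bad).Nonempty :=
      Set.sdiff_nonempty.2 fun h => (mk_le_mk_of_subset h).not_gt hbad
    obtain ⟨z, hz, hzA⟩ := ih (fun j hj => hT j (by omega)) (p + s • v m)
    refine ⟨z + s • v m, Set.mem_image2_of_mem hz hsT, fun k hk => ?_⟩
    rcases (Nat.lt_succ_iff_lt_or_eq.1 hk) with hk | hk
    · simpa only [add_comm z, ← add_assoc] using hzA k hk
    · simp only [bad, Set.mem_iUnion, Set.mem_ofPred_eq, not_exists] at hs
      simpa only [← add_assoc, hk] using hs z hz k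

end sumGrid

theorem sumGrid_subset_closedBall {E : Type} [NormedAddCommGroup E] [NormedSpace ℝ E]
    {v : ℕ → E} {T : ℕ → Set ℝ} {r : ℝ} (hv : ∀ j, ‖v j‖ ≤ 1)
    (hT : ∀ j, T j ⊆ Metric.closedBall 0 r) : ∀ m : ℕ, sumGrid v T m ⊆ Metric.closedBall 0 (m * r)
  | 0, _, rfl => by simp
  | m + 1, _, ⟨y, hy, s, hs, rfl⟩ => by
    have hy : ‖y‖ ≤ m * r := mem_closedBall_zero_iff.1 (sumGrid_subset_closedBall hv hT m hy)
    have hs : ‖s‖ ≤ r := mem_closedBall_zero_iff.1 (hT m hs)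
    rw [mem_closedBall_zero_iff]
    calc ‖y + s • v m‖ ≤ ‖y‖ + ‖s‖ * ‖v m‖ := (norm_add_le _ _).trans_eq (by rw [norm_smul])
      _ ≤ m * r + r := add_le_add hy ((mul_le_of_le_one_right (norm_nonneg s) (hv m)).trans hs)
      _ = (m + 1 : ℕ) * r := by push_cast; ring

theorem exists_subset_ball_mk_eq {E : Type*} [NormedAddCommGroup E] [NormedSpace ℝ E]
    [Nontrivial E] {κ : Cardinal} (hκ : κ ≤ 𝔠) (x : E) {ε : ℝ} (hε : 0 < ε) :
    ∃ P ⊆ Metric.ball x ε, #P = κ :=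
  le_mk_iff_exists_subset.1 <|
    hκ.trans (continuum_le_cardinal_of_isOpen ℝ Metric.isOpen_ball ⟨x, Metric.mem_ball_self hε⟩)

theorem exists_superset_subset_ball_mk_eq {E : Type*} [NormedAddCommGroup E] [NormedSpace ℝ E]
    [Nontrivial E] {x : E} {ε : ℝ} (hε : 0 < ε) {S : Set E} (hS : S ⊆ Metric.ball x ε)
    {κ : Cardinal} (hSκ : #S ≤ κ) (hκ₀ : ℵ₀ ≤ κ) (hκ : κ ≤ 𝔠) :
    ∃ Z, S ⊆ Z ∧ Z ⊆ Metric.ball x ε ∧ #Z = κ := by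
  obtain ⟨P, hPε, hP⟩ := exists_subset_ball_mk_eq hκ x hε
  refine ⟨S ∪ P, Set.subset_union_left, Set.union_subset hS hPε, le_antisymm ?_ ?_⟩
  · calc #(S ∪ P : Set E) ≤ #S + #P := mk_union_le S P
      _ ≤ κ + κ := by rw [hP]; gcongr
      _ = κ := add_eq_self hκ₀
  · exact hP ▸ mk_le_mk_of_subset Set.subset_union_right

theorem exists_subsets_ball_mk_eq_aleph {δ : Ordinal} {n : ℕ} (h : ℵ_ (δ + n) ≤ 𝔠) {r : ℝ}
    (hr : 0 < r) :
    ∃ T : ℕ → Set ℝ, (∀ j, T j ⊆ Metric.ball 0 r) ∧ ∀ j ≤ n, #(T j) = ℵ_ (δ + j) := by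
  choose T hTr hT using fun j => exists_subset_ball_mk_eq (E := ℝ) (κ := ℵ_ (δ + (min j n : ℕ)))
    ((aleph_le_aleph.2 (by gcongr; exact_mod_cast min_le_right j n)).trans h) 0 hr
  exact ⟨T, hTr, fun j hj => by rw [hT j, min_eq_left hj]⟩

theorem mk_setOf_add_smul_mem_le_hplane {d : ℕ} {u w : EuclideanSpace ℝ (Fin d)} (hw : w ≠ 0)
    (huw : inner ℝ u w = (0 : ℝ)) (q : EuclideanSpace ℝ (Fin d))
    (A : Set (EuclideanSpace ℝ (Fin d))) :
    #{s : ℝ | q + s • w ∈ A} ≤ #(Hplane u q ∩ A : Set (EuclideanSpace ℝ (Fin d))) := by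
  have hinj : Function.Injective fun s : ℝ => q + s • w :=
    fun a b h => smul_left_injective ℝ hw (add_left_cancel h)
  rw [← mk_image_eq hinj]
  refine mk_le_mk_of_subset ?_
  rintro _ ⟨s, hs, rfl⟩
  refine ⟨?_, hs⟩
  change inner ℝ (q + s • w - q) u = (0 : ℝ)
  rw [add_sub_cancel_left, real_inner_smul_left, real_inner_comm, huw, mul_zero]

open Module in
theorem exists_norm_eq_one_forall_inner_eq_zero {E : Type*} [NormedAddCommGroup E]
    [InnerProductSpace ℝ E] [FiniteDimensional ℝ E] {ι : Type*} [Finite ι] (w : ι → E)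
    (h : Nat.card ι < finrank ℝ E) : ∃ v : E, ‖v‖ = 1 ∧ ∀ i, inner ℝ (w i) v = (0 : ℝ) := by
  have := Fintype.ofFinite ι
  set V := Submodule.span ℝ (Set.range w)
  have hV : V ≠ ⊤ := fun hV => by
    have : finrank ℝ V ≤ Fintype.card ι := finrank_range_le_card w
    rw [hV, finrank_top, ← Nat.card_eq_fintype_card] at this
    omega
  obtain ⟨v, hvV, hv0⟩ := (Submodule.ne_bot_iff _).1 (mt Submodule.orthogonal_eq_bot_iff.1 hV)
  refine ⟨‖v‖⁻¹ • v, norm_smul_inv_norm hv0, fun i => ?_⟩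
  exact Submodule.inner_right_of_mem_orthogonal (Submodule.subset_span (Set.mem_range_self i))
    (Vᗮ.smul_mem _ hvV)

theorem Nat.card_fiber_div_le {N c : ℕ} (hc : 0 < c) (j : ℕ) :
    Nat.card {k : Fin N // (k : ℕ) / c = j} ≤ c := by
  refine (Nat.card_le_card_of_injective (fun k => (⟨k.1 % c, Nat.mod_lt _ hc⟩ : Fin c))
    fun k l hkl => ?_).trans_eq (Nat.card_eq_fintype_card.trans (Fintype.card_fin c))
  ext
  rw [← Nat.div_add_mod k.1.1 c, ← Nat.div_add_mod l.1.1 c, k.2, l.2]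
  exact congrArg (c * j + ·) (Fin.val_eq_of_eq hkl)

open Module in
theorem exists_norm_eq_one_forall_inner_div_eq_zero {E : Type*} [NormedAddCommGroup E]
    [InnerProductSpace ℝ E] [FiniteDimensional ℝ E] {N c : ℕ} (hc : 0 < c) (hcE : c < finrank ℝ E)
    (u : Fin N → E) : ∃ v : ℕ → E, (∀ j, ‖v j‖ = 1) ∧ ∀ k, inner ℝ (u k) (v (k / c)) = (0 : ℝ) := by
  choose v hv1 hvu using fun j => exists_norm_eq_one_forall_inner_eq_zero
    (fun k : {k : Fin N // (k : ℕ) / c = j} => u k) ((Nat.card_fiber_div_le hc j).trans_lt hcE)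
  exact ⟨v, hv1, fun k => hvu _ ⟨k, rfl⟩⟩

theorem stmt13_general (δ : Ordinal) (d n : ℕ) (hd : 3 ≤ d)
    (u : Fin ((n + 1) * (d - 1) + 1) → EuclideanSpace ℝ (Fin d))
    (A : Fin ((n + 1) * (d - 1) + 1) → Set (EuclideanSpace ℝ (Fin d)))
    (hA : ∀ (p : EuclideanSpace ℝ (Fin d)) (k : Fin ((n + 1) * (d - 1) + 1)),
      Cardinal.mk (Hplane (u k) p ∩ A k : Set (EuclideanSpace ℝ (Fin d))) < aleph δ)
    (hcont : aleph (δ + n) < continuum) :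
    ∀ ε : ℝ, 0 < ε →
      ∃ Z : Set (EuclideanSpace ℝ (Fin d)),
        (∀ z ∈ Z, ∀ i, |z i| < ε) ∧
        Cardinal.mk Z = aleph (δ + n + 1) ∧
        ∀ p : EuclideanSpace ℝ (Fin d), ¬ (p + ·) '' Z ⊆ ⋃ k, A k := by
  intro ε hε
  have hκ : ℵ_ (δ + n + 1) ≤ 𝔠 := succ_aleph (δ + n) ▸ Order.succ_le_of_lt hcont
  have : Nontrivial (EuclideanSpace ℝ (Fin d)) :=
    Module.nontrivial_of_finrank_pos (R := ℝ) (by rw [finrank_euclideanSpace_fin]; omega)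
  obtain ⟨v, hv1, hvu⟩ := exists_norm_eq_one_forall_inner_div_eq_zero (by omega : 0 < d - 1)
    (by rw [finrank_euclideanSpace_fin]; omega) u
  have hline : ∀ k q, #{s : ℝ | q + s • v ((k : ℕ) / (d - 1)) ∈ A k} < ℵ_ δ := fun k q =>
    (mk_setOf_add_smul_mem_le_hplane (norm_ne_zero_iff.1 (by simp [hv1])) (hvu k) q
      (A k)).trans_lt (hA q k)
  have hblock : ∀ k : Fin ((n + 1) * (d - 1) + 1), (k : ℕ) / (d - 1) < n + 2 := fun k =>
    Nat.lt_succ_of_le <| Nat.div_le_of_le_mul <| (Nat.lt_succ_iff.1 k.2).trans_eq (mul_comm _ _)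
  obtain ⟨T, hTr, hT⟩ := exists_subsets_ball_mk_eq_aleph (n := n + 1)
    (by simpa [add_assoc] using hκ) (by positivity : 0 < ε / (n + 3))
  have hr : ((n + 2 : ℕ) : ℝ) * (ε / (n + 3)) < ε := by
    rw [mul_div_assoc', div_lt_iff₀ (by positivity)]
    push_cast
    linarith
  have hgrid : sumGrid v T (n + 2) ⊆ Metric.ball 0 ε :=
    (sumGrid_subset_closedBall (fun j => (hv1 j).le)
      (fun j => (hTr j).trans Metric.ball_subset_closedBall) (n + 2)).trans
      (Metric.closedBall_subset_ball hr)
  obtain ⟨Z, hgZ, hZε, hZ⟩ := exists_superset_subset_ball_mk_eq hε hgrid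
    (by simpa [add_assoc] using mk_sumGrid_succ_le (m := n + 1) fun j hj => (hT j hj).le)
    (aleph0_le_aleph _) hκ
  refine ⟨Z, fun z hz i => (PiLp.norm_apply_le z i).trans_lt (mem_ball_zero_iff.1 (hZε hz)), hZ,
    fun p hsub => ?_⟩
  obtain ⟨z, hz, hzA⟩ := exists_mem_sumGrid_add_notMem _ hline (m := n + 2)
    (fun j hj => hT j (by omega)) p
  obtain ⟨k, hk⟩ := Set.mem_iUnion.1 (hsub ⟨z, hgZ hz, rfl⟩)
  exact hzA k (hblock k) hk

theorem stmt13 (δ : Ordinal) (d n : ℕ) (hd : 3 ≤ d)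
    (u : Fin ((n + 1) * (d - 1) + 1) → EuclideanSpace ℝ (Fin d))
    (hu : ∀ k, u k ≠ 0) (huinj : Function.Injective u)
    (A : Fin ((n + 1) * (d - 1) + 1) → Set (EuclideanSpace ℝ (Fin d)))
    (hA : ∀ (p : EuclideanSpace ℝ (Fin d)) (k : Fin ((n + 1) * (d - 1) + 1)),
      Cardinal.mk (Hplane (u k) p ∩ A k : Set (EuclideanSpace ℝ (Fin d))) < aleph δ)
    (hcont : aleph (δ + n) < continuum) :
    ∀ ε : ℝ, 0 < ε →
      ∃ Z : Set (EuclideanSpace ℝ (Fin d)),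
        (∀ z ∈ Z, ∀ i, |z i| < ε) ∧
        Cardinal.mk Z = aleph (δ + n + 1) ∧
        ∀ p : EuclideanSpace ℝ (Fin d), ¬ (p + ·) '' Z ⊆ ⋃ k, A k :=
  stmt13_general δ d n hd u A hA hcont
end

section
/- For all d ≥ 3, CH (i.e., 2^ℵ₀ ≤ ℵ₁) is equivalent to the existence of sets A₁, …, A_d covering ℝ^d such that for every x ∈ ℝ and every 1 ≤ i ≤ d, the set H_i(x) ∩ A_i is countable, where H_i(x) = {(p₁, …, p_d) ∈ ℝ^d : p_i = x}. -/
/-!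
Under CH, fix an injection `f` of `ℝ` into `ω₁`, so that every `{y | f y ≤ f x}` is countable,
and put a point into `A i` when its `i`-th coordinate is `f`-maximal. A point of `A i` on the
hyperplane `p i = x` has all its coordinates `f`-below `x`, so there are only countably many.

Conversely, if `𝔠 > ℵ₁`, take `Y ⊆ ℝ` of size `ℵ₁`. The points of the sets `{p | p i = y} ∩ A i`
with `y ∈ Y` are at most `ℵ₁` many, so some `t` is not the `k`-th coordinate of any of them.
Then every point with `k`-th coordinate `t` and all other coordinates equal to one `y ∈ Y` lies
in `A k`, which puts `ℵ₁` points of `A k` on the hyperplane `p k = t`.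
-/

open Cardinal Set Function

universe u v

section

variable {ι : Type v} {α : Type u}

structure IsCountableHyperplaneCover (A : ι → Set (ι → α)) : Prop where
  iUnion_eq_univ : ⋃ i, A i = Set.univ
  countable_inter : ∀ (x : α) (i : ι), ({p | p i = x} ∩ A i).Countable

theorem countable_Iic_ord_aleph_one_toType (b : (ℵ₁ : Cardinal.{u}).ord.ToType) :
    (Iic b).Countable := by
  rw [← Iio_insert]
  refine Countable.insert b (le_aleph0_iff_set_countable.1 (lt_aleph_one_iff.1 ?_))
  simpa using mk_Iio_lt b (by simp)

theorem isCountableHyperplaneCover_of_injective [Finite ι] [Nonempty ι] {β : Type*}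
    [LinearOrder β] {f : α → β} (hf : Injective f) (hβ : ∀ b : β, (Iic b).Countable) :
    IsCountableHyperplaneCover fun i ↦ {p : ι → α | ∀ j, f (p j) ≤ f (p i)} where
  iUnion_eq_univ :=
    eq_univ_of_forall fun p : ι → α ↦ mem_iUnion.2 (Finite.exists_max fun j ↦ f (p j))
  countable_inter x i := by
    refine (countable_pi fun _ ↦ (hβ (f x)).preimage hf).mono ?_
    rintro p ⟨rfl, hp⟩
    exact hp

theorem mk_le_aleph_one_of_isCountableHyperplaneCover [Finite ι] [Nontrivial ι]
    {A : ι → Set (ι → α)} (hA : IsCountableHyperplaneCover A) : #α ≤ ℵ₁ := by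
  classical
  by_contra! hα
  obtain ⟨Y, hY⟩ := le_mk_iff_exists_set.1 hα.le
  obtain ⟨j, k, hjk⟩ := exists_pair_ne ι
  set Z : Set α := ⋃ y ∈ Y, ⋃ i, (· k) '' ({p | p i = y} ∩ A i)
  have hZ : #Z ≤ ℵ₁ := by
    refine (mk_biUnion_le _ Y).trans ?_
    calc #Y * ⨆ y : Y, #(⋃ i, (· k) '' ({p | p i = (y : α)} ∩ A i))
        ≤ ℵ₁ * ℵ₀ := by
          refine mul_le_mul' hY.le (ciSup_le' fun y ↦ ?_)
          exact (countable_iUnion fun i ↦ (hA.countable_inter y i).image _).le_aleph0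
      _ = ℵ₁ := mul_eq_left (aleph0_le_aleph 1) (aleph0_le_aleph 1) aleph0_ne_zero
  obtain ⟨t, ht⟩ : ∃ t, t ∉ Z := by
    by_contra! hZα
    rw [eq_univ_of_forall hZα, mk_univ] at hZ
    exact hα.not_ge hZ
  set g : α → ι → α := fun y ↦ update (fun _ ↦ y) k t
  have hg : MapsTo g Y ({p | p k = t} ∩ A k) := by
    intro y hy
    obtain ⟨i, hi⟩ := mem_iUnion.1 (hA.iUnion_eq_univ ▸ mem_univ (g y))
    have hgk : g y k = t := update_self ..
    refine ⟨hgk, ?_⟩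
    obtain rfl | hik := eq_or_ne i k
    · exact hi
    · have hgi : g y i = y := update_of_ne hik ..
      exact (ht (mem_iUnion₂.2 ⟨y, hy, mem_iUnion.2 ⟨i, g y, ⟨hgi, hi⟩, hgk⟩⟩)).elim
  have hYc : Y.Countable := hg.countable_of_injOn
    (fun y _ y' _ h ↦ by simpa [g, update_of_ne hjk] using congrFun h j) (hA.countable_inter t k)
  exact (aleph0_lt_aleph_one.trans_eq hY.symm).not_ge hYc.le_aleph0

theorem exists_isCountableHyperplaneCover_iff [Finite ι] [Nontrivial ι] :
    (∃ A : ι → Set (ι → α), IsCountableHyperplaneCover A) ↔ #α ≤ ℵ₁ := by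
  refine ⟨fun ⟨A, hA⟩ ↦ mk_le_aleph_one_of_isCountableHyperplaneCover hA, fun h ↦ ?_⟩
  obtain ⟨f, hf⟩ := le_def _ _ |>.1 (h.trans_eq (mk_ord_toType _).symm)
  exact ⟨_, isCountableHyperplaneCover_of_injective hf countable_Iic_ord_aleph_one_toType⟩

open scoped ENNReal in
theorem exists_piLp_cover_iff (r : ℝ≥0∞) :
    (∃ A : ι → Set (PiLp r fun _ : ι ↦ α), (⋃ i, A i) = Set.univ ∧
        ∀ (x : α) (i : ι), ({p : PiLp r fun _ : ι ↦ α | p i = x} ∩ A i).Countable) ↔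
      ∃ A : ι → Set (ι → α), IsCountableHyperplaneCover A := by
  constructor
  · rintro ⟨A, hcover, hcount⟩
    refine ⟨fun i ↦ WithLp.toLp r ⁻¹' A i, ?_,
      fun x i ↦ (hcount x i).preimage (WithLp.toLp_injective r)⟩
    rw [← preimage_iUnion, hcover, preimage_univ]
  · rintro ⟨A, hA⟩
    refine ⟨fun i ↦ WithLp.ofLp ⁻¹' A i, ?_,
      fun x i ↦ (hA.countable_inter x i).preimage (WithLp.ofLp_injective r)⟩
    rw [← preimage_iUnion, hA.iUnion_eq_univ, preimage_univ]

end

theorem continuum_le_aleph_one_iff_mk_real : continuum.{u} ≤ ℵ₁ ↔ #ℝ ≤ ℵ₁ := by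
  rw [mk_real, ← lift_le_aleph_one.{0, u}, lift_continuum.{u, 0}]

theorem stmt16 (d : ℕ) (hd : 3 ≤ d) :
    continuum ≤ aleph 1 ↔
      ∃ A : Fin d → Set (EuclideanSpace ℝ (Fin d)),
        (⋃ i, A i) = Set.univ ∧
        ∀ (x : ℝ) (i : Fin d),
          ({p : EuclideanSpace ℝ (Fin d) | p i = x} ∩ A i).Countable := by
  have : Nontrivial (Fin d) := Fin.nontrivial_iff_two_le.2 (by omega)
  rw [exists_piLp_cover_iff, exists_isCountableHyperplaneCover_iff,
    continuum_le_aleph_one_iff_mk_real]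
end
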